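/- Suppose g is strictly increasing and bounded on [0,∞). Then for any Borel measure μ on ℝⁿ with 0 < μ(ℝⁿ) < ∞ there is at most one point x_c ∈ ℝⁿ with V(x_c) = 0. -/

import Mathlib

open MeasureTheory Filter Set Topology

/-- The radial vector field `v(y) = g(|y|) y/|y|` (with `v(0)=0`). -/
noncomputable def radialField {n : ℕ} (g : ℝ → ℝ)
    (y : EuclideanSpace ℝ (Fin n)) : EuclideanSpace ℝ (Fin n) :=
  (g ‖y‖ / ‖y‖) • y

/-- The vector field `V(x) = ∫ v(x+y) dμ(y)`. -/
noncomputable def VField {n : ℕ} (g : ℝ → ℝ)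
    (μ : Measure (EuclideanSpace ℝ (Fin n)))
    (x : EuclideanSpace ℝ (Fin n)) : EuclideanSpace ℝ (Fin n) :=
  ∫ y, radialField g (x + y) ∂μ

open RealInnerProductSpace

/-! A strictly increasing `g` with `g 0 = 0` makes `v` strictly monotone,
`⟪a - b, v a - v b⟫ > 0` for `a ≠ b`. Integrating this against `μ` makes `V` strictly monotone
as well, so `⟪x₁ - x₂, V x₁ - V x₂⟫ > 0` for `x₁ ≠ x₂`, and `V` has at most one zero. -/

theorem integral_pos_of_forall_pos {α : Type*} [MeasurableSpace α] {μ : Measure α} [NeZero μ]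
    {f : α → ℝ} (hfi : Integrable f μ) (hf : ∀ x, 0 < f x) : 0 < ∫ x, f x ∂μ := by
  rw [integral_pos_iff_support_of_nonneg (fun x => (hf x).le) hfi,
    (eq_univ_of_forall fun x => (hf x).ne' : Function.support f = univ)]
  exact Measure.measure_univ_pos.mpr (NeZero.ne μ)

section radialField

variable {n : ℕ} {g : ℝ → ℝ}

theorem norm_radialField_le (g : ℝ → ℝ) (y : EuclideanSpace ℝ (Fin n)) :
    ‖radialField g y‖ ≤ |g ‖y‖| := by
  rcases eq_or_ne y 0 with rfl | hy
  · simp [radialField]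
  · rw [radialField, norm_smul, Real.norm_eq_abs, abs_div, abs_norm,
      div_mul_cancel₀ _ (norm_ne_zero_iff.mpr hy)]

theorem continuousAt_radialField_zero (hg_cont : ContinuousOn g (Ici 0)) (hg0 : g 0 = 0) :
    ContinuousAt (radialField g) (0 : EuclideanSpace ℝ (Fin n)) := by
  have h_norm : Tendsto (‖·‖) (𝓝 (0 : EuclideanSpace ℝ (Fin n))) (𝓝[Ici 0] 0) :=
    tendsto_nhdsWithin_iff.mpr ⟨tendsto_norm_zero, Eventually.of_forall fun y => norm_nonneg y⟩
  have h_bound : Tendsto (fun y : EuclideanSpace ℝ (Fin n) => |g ‖y‖|) (𝓝 0) (𝓝 0) := by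
    simpa [hg0] using ((hg_cont 0 self_mem_Ici).tendsto.comp h_norm).abs
  simpa [ContinuousAt, radialField] using
    squeeze_zero_norm (norm_radialField_le g) h_bound

theorem continuous_radialField (hg_cont : ContinuousOn g (Ici 0)) (hg0 : g 0 = 0) :
    Continuous (radialField g (n := n)) := by
  refine continuous_iff_continuousAt.mpr fun y => ?_
  rcases eq_or_ne y 0 with rfl | hy
  · exact continuousAt_radialField_zero hg_cont hg0
  have hpos : 0 < ‖y‖ := norm_pos_iff.mpr hy
  have hg_at : ContinuousAt g ‖y‖ := hg_cont.continuousAt (Ici_mem_nhds hpos)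
  exact ((hg_at.comp continuous_norm.continuousAt).div continuous_norm.continuousAt
    hpos.ne').smul continuousAt_id

/-- With `φ r = g r / r` and `t = ⟪a, b⟫`, the pairing equals
`(g ‖a‖ - g ‖b‖)(‖a‖ - ‖b‖) + (φ ‖a‖ + φ ‖b‖)(‖a‖‖b‖ - t)`: both terms are nonnegative by
monotonicity and Cauchy–Schwarz, the first is positive if `‖a‖ ≠ ‖b‖`, the second if `‖a‖ = ‖b‖`. -/
theorem inner_sub_radialField_pos (hg0 : g 0 = 0) (hg_mono : StrictMonoOn g (Ici 0))
    {a b : EuclideanSpace ℝ (Fin n)} (hab : a ≠ b) :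
    0 < ⟪a - b, radialField g a - radialField g b⟫ := by
  set A := ‖a‖
  set B := ‖b‖
  set t := ⟪a, b⟫
  have hg_nonneg : ∀ r : ℝ, 0 ≤ r → 0 ≤ g r := fun r hr =>
    hg0 ▸ hg_mono.monotoneOn self_mem_Ici hr hr
  have hφA : g A / A * A = g A := div_mul_cancel_of_imp fun h => by rw [h, hg0]
  have hφB : g B / B * B = g B := div_mul_cancel_of_imp fun h => by rw [h, hg0]
  have hφA_nonneg : 0 ≤ g A / A := div_nonneg (hg_nonneg A (norm_nonneg a)) (norm_nonneg a)
  have hφB_nonneg : 0 ≤ g B / B := div_nonneg (hg_nonneg B (norm_nonneg b)) (norm_nonneg b)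
  have h_cs : t ≤ A * B := real_inner_le_norm a b
  have h_expand : ⟪a - b, radialField g a - radialField g b⟫
      = (g A - g B) * (A - B) + (g A / A + g B / B) * (A * B - t) := by
    simp only [radialField, inner_sub_left, inner_sub_right, real_inner_smul_right,
      real_inner_self_eq_norm_sq, real_inner_comm a b]
    linear_combination (A - B) * hφA + (B - A) * hφB
  rw [h_expand]
  rcases lt_trichotomy A B with hAB | hAB | hAB
  · have := hg_mono (norm_nonneg a) (norm_nonneg b) hAB
    nlinarith [mul_nonneg (add_nonneg hφA_nonneg hφB_nonneg) (sub_nonneg.mpr h_cs)]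
  · have hA : 0 < A := by
      refine (norm_nonneg a).lt_of_ne' fun hA => hab ?_
      rw [norm_eq_zero.mp hA, norm_eq_zero.mp (hAB.symm.trans hA)]
    have h_dist : 0 < ‖a - b‖ ^ 2 := by positivity [norm_sub_pos_iff.mpr hab]
    have h_gap : 0 < A * B - t := by
      rw [norm_sub_sq_real] at h_dist
      nlinarith
    have hφA_pos : 0 < g A / A := div_pos (hg0 ▸ hg_mono self_mem_Ici hA.le hA) hA
    have h_zero : (g A - g B) * (A - B) = 0 := by rw [hAB, sub_self, sub_self, zero_mul]
    rw [h_zero, zero_add]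
    exact mul_pos (add_pos_of_pos_of_nonneg hφA_pos hφB_nonneg) h_gap
  · have := hg_mono (norm_nonneg b) (norm_nonneg a) hAB
    nlinarith [mul_nonneg (add_nonneg hφA_nonneg hφB_nonneg) (sub_nonneg.mpr h_cs)]

variable {μ : Measure (EuclideanSpace ℝ (Fin n))} {C : ℝ}

theorem integrable_radialField_comp_add [IsFiniteMeasure μ] (hg_cont : ContinuousOn g (Ici 0))
    (hg0 : g 0 = 0) (hC : ∀ r, 0 ≤ r → |g r| ≤ C) (x : EuclideanSpace ℝ (Fin n)) :
    Integrable (fun y => radialField g (x + y)) μ :=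
  .of_bound
    ((continuous_radialField hg_cont hg0).comp (continuous_const_add x)).aestronglyMeasurable C (Eventually.of_forall fun _ => (norm_radialField_le g _).trans (hC _ (norm_nonneg _)))

theorem inner_sub_VField_pos [IsFiniteMeasure μ] [NeZero μ] (hg_cont : ContinuousOn g (Ici 0))
    (hg0 : g 0 = 0) (hg_mono : StrictMonoOn g (Ici 0)) (hC : ∀ r, 0 ≤ r → |g r| ≤ C)
    {x₁ x₂ : EuclideanSpace ℝ (Fin n)} (hne : x₁ ≠ x₂) :
    0 < ⟪x₁ - x₂, VField g μ x₁ - VField g μ x₂⟫ := by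
  have h₁ := integrable_radialField_comp_add (μ := μ) hg_cont hg0 hC x₁
  have h₂ := integrable_radialField_comp_add (μ := μ) hg_cont hg0 hC x₂
  have hpos : ∀ y, 0 < ⟪x₁ - x₂, radialField g (x₁ + y) - radialField g (x₂ + y)⟫ := fun y => by
    simpa using inner_sub_radialField_pos hg0 hg_mono (a := x₁ + y) (b := x₂ + y)
      (by simpa using hne)
  have h_sub : Integrable (fun y => radialField g (x₁ + y) - radialField g (x₂ + y)) μ := h₁.sub h₂
  rw [VField, VField, ← integral_sub h₁ h₂, ← integral_inner h_sub]
  exact integral_pos_of_forall_pos (h_sub.const_inner _) hpos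

end radialField

theorem center_of_mass_unique_strictMono_bounded_general {n : ℕ}
    (g : ℝ → ℝ) (hg_cont : ContinuousOn g (Ici 0)) (hg0 : g 0 = 0)
    (hg_mono : StrictMonoOn g (Ici 0))
    (hg_bdd : ∃ C : ℝ, ∀ r : ℝ, 0 ≤ r → |g r| ≤ C)
    (μ : Measure (EuclideanSpace ℝ (Fin n)))
    (hμpos : 0 < μ Set.univ) (hμfin : μ Set.univ < ⊤) :
    ∀ x₁ x₂ : EuclideanSpace ℝ (Fin n),
      VField g μ x₁ = 0 → VField g μ x₂ = 0 → x₁ = x₂ := by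
  intro x₁ x₂ h₁ h₂
  by_contra hne
  obtain ⟨C, hC⟩ := hg_bdd
  have : IsFiniteMeasure μ := ⟨hμfin⟩
  have : NeZero μ := ⟨Measure.measure_univ_pos.mp hμpos⟩
  simpa [h₁, h₂] using inner_sub_VField_pos (μ := μ) hg_cont hg0 hg_mono hC hne

theorem center_of_mass_unique_strictMono_bounded {n : ℕ} (hn : 1 ≤ n)
    (g : ℝ → ℝ) (hg_cont : ContinuousOn g (Ici 0)) (hg0 : g 0 = 0)
    (hg_mono : StrictMonoOn g (Ici 0))
    (hg_bdd : ∃ C : ℝ, ∀ r : ℝ, 0 ≤ r → |g r| ≤ C)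
    (μ : Measure (EuclideanSpace ℝ (Fin n)))
    (hμpos : 0 < μ Set.univ) (hμfin : μ Set.univ < ⊤) :
    ∀ x₁ x₂ : EuclideanSpace ℝ (Fin n),
      VField g μ x₁ = 0 → VField g μ x₂ = 0 → x₁ = x₂ :=
  center_of_mass_unique_strictMono_bounded_general g hg_cont hg0 hg_mono hg_bdd μ hμpos hμfin
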